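/- arXiv:1510.00634 — 4 statements merged into one kernel-verified Lean document; each statement's English description precedes it below -/
import Mathlib

section
/- Let w be a nonempty word of length n over a finite alphabet and let p > 0 be a divisor of n. Then p is a full Abelian period of w if and only if for every k with 0 ≤ k ≤ n/p − 1, the suffix w[kp .. n−1] of w starting at position k·p is a scaled factor of w. -/
/-- `p` is a full Abelian period of the word `w` of length `n`: `p > 0`,
`p` divides `n`, and all the consecutive blocks `w[kp .. (k+1)p - 1]` for
`0 ≤ k < n/p` have the same Parikh vector. -/
def FullAbelianPeriod {α : Type*} [DecidableEq α] (w : List α) (p : ℕ) : Prop :=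
  0 < p ∧ p ∣ w.length ∧
    ∀ k < w.length / p, ∀ a : α,
      ((w.drop (k * p)).take p).count a = (w.take p).count a

/-- `u` is a scaled factor of `w` (relative to the gcd `g` of the entries of
the Parikh vector of `w`): `u` is a factor of `w` and there is `k ≥ 0` with
`|u|_a = k * (|w|_a / g)` for every letter `a`. -/
def IsScaledFactor {α : Type*} [DecidableEq α] (g : ℕ) (w u : List α) : Prop :=
  u <:+: w ∧ ∃ k : ℕ, ∀ a : α, u.count a = k * (w.count a / g)

/-!
If all blocks of length `p` share the Parikh vector `b`, the suffix starting at block `k` has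
Parikh vector `(n/p - k) • b`; since `𝒫_w = (n/p) • b`, the gcd `g` is `n/p` times the gcd of
`b`, so `b` is itself a multiple of `𝒫_w / g`. Conversely, a scaled factor `u` has Parikh vector
`(|u| / s) • (𝒫_w / g)`, which depends on `u` only through its length; two suffixes starting at
consecutive block boundaries thus differ by a block with Parikh vector `(p / s) • (𝒫_w / g)`.
-/

namespace List

variable {α : Type*}

theorem drop_eq_take_drop_append_drop (l : List α) (i p : ℕ) :
    l.drop i = (l.drop i).take p ++ l.drop (i + p) := by
  rw [← drop_drop, take_append_drop]

variable [DecidableEq α]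

theorem sum_count_eq_length [Fintype α] (l : List α) : ∑ a, l.count a = l.length := by
  simpa using Multiset.sum_count_eq_card (s := Finset.univ) (m := (l : Multiset α)) (by simp)

theorem count_mul_sum_eq_length_mul [Fintype α] {u : List α} {q : α → ℕ} {t : ℕ}
    (h : ∀ a, u.count a = t * q a) (a : α) : u.count a * ∑ b, q b = u.length * q a := by
  rw [← sum_count_eq_length u, Finset.sum_congr rfl fun b _ => h b, ← Finset.mul_sum, h a]
  ring

theorem count_mul_eq_length_mul_of_append {u v : List α} {a : α} {Q r : ℕ}
    (huv : (u ++ v).count a * Q = (u ++ v).length * r) (hv : v.count a * Q = v.length * r) :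
    u.count a * Q = u.length * r := by
  rw [count_append, length_append, add_mul, add_mul] at huv
  linarith

theorem sum_count_div_gcd_pos [Fintype α] {w : List α} (hw : w ≠ []) :
    0 < ∑ a, w.count a / Finset.univ.gcd fun b => w.count b := by
  set g := Finset.univ.gcd fun b => w.count b
  obtain ⟨x, hx⟩ := exists_mem_of_ne_nil w hw
  have hcount : 0 < w.count x := count_pos_iff.mpr hx
  have hg : 0 < g :=
    Nat.pos_of_ne_zero fun h => hcount.ne' (Finset.gcd_eq_zero_iff.mp h x (Finset.mem_univ x))
  calc 0 < w.count x / g :=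
      Nat.div_pos (Nat.le_of_dvd hcount (Finset.gcd_dvd (Finset.mem_univ x))) hg
    _ ≤ ∑ a, w.count a / g :=
      Finset.single_le_sum (f := fun a => w.count a / g) (fun _ _ => Nat.zero_le _)
        (Finset.mem_univ x)

end List

section

open List

variable {α : Type*} [DecidableEq α]

theorem FullAbelianPeriod.count_drop {w : List α} {p : ℕ} (h : FullAbelianPeriod w p) (a : α)
    {k : ℕ} (hk : k ≤ w.length / p) :
    (w.drop (k * p)).count a = (w.length / p - k) * (w.take p).count a := by
  obtain ⟨-, hpn, hblock⟩ := h
  induction hk using Nat.decreasingInduction with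
  | self => simp [Nat.div_mul_cancel hpn]
  | of_succ k hk ih =>
    rw [drop_eq_take_drop_append_drop w (k * p) p, count_append, ← add_one_mul, ih, hblock k hk,
      show w.length / p - k = w.length / p - (k + 1) + 1 by omega]
    ring

theorem FullAbelianPeriod.count_eq {w : List α} {p : ℕ} (h : FullAbelianPeriod w p) (a : α) :
    w.count a = w.length / p * (w.take p).count a := by
  simpa using h.count_drop a (Nat.zero_le _)

theorem FullAbelianPeriod.isScaledFactor_drop [Fintype α] {w : List α} {p : ℕ}
    (h : FullAbelianPeriod w p) {k : ℕ} (hk : k < w.length / p) :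
    IsScaledFactor (Finset.univ.gcd fun a => w.count a) w (w.drop (k * p)) := by
  have hgcd : (Finset.univ.gcd fun a => w.count a) =
      w.length / p * Finset.univ.gcd fun a => (w.take p).count a := by
    simp_rw [h.count_eq, Finset.gcd_mul_left, normalize_eq]
  refine ⟨(drop_suffix _ w).isInfix,
    (w.length / p - k) * Finset.univ.gcd fun a => (w.take p).count a, fun a => ?_⟩
  rw [h.count_drop a hk.le, hgcd, h.count_eq, Nat.mul_div_mul_left _ _ (by omega), mul_assoc,
    Nat.mul_div_cancel' (Finset.gcd_dvd (Finset.mem_univ a))]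

theorem fullAbelianPeriod_of_isScaledFactor_drop [Fintype α] {w : List α} {p : ℕ} (hp : 0 < p)
    (hpn : p ∣ w.length)
    (h : ∀ k < w.length / p,
      IsScaledFactor (Finset.univ.gcd fun a => w.count a) w (w.drop (k * p))) :
    FullAbelianPeriod w p := by
  refine ⟨hp, hpn, fun k hk a => ?_⟩
  set m := w.length / p
  set q := fun b => w.count b / Finset.univ.gcd fun c => w.count c
  have hsuffix : ∀ j ≤ m,
      (w.drop (j * p)).count a * ∑ b, q b = (w.drop (j * p)).length * q a := by
    intro j hj
    rcases hj.lt_or_eq with hj | rfl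
    · obtain ⟨-, t, ht⟩ := h j hj
      exact count_mul_sum_eq_length_mul ht a
    · simp [m, Nat.div_mul_cancel hpn]
  have hblock : ∀ j < m, ((w.drop (j * p)).take p).count a * ∑ b, q b = p * q a := by
    intro j hj
    have hjp : j * p + p ≤ w.length := by
      rw [← add_one_mul]; exact (Nat.le_div_iff_mul_le hp).mp hj
    have hcurrent := hsuffix j hj.le
    have hnext := hsuffix (j + 1) hj
    rw [drop_eq_take_drop_append_drop _ _ p] at hcurrent
    rw [add_one_mul] at hnext
    have := count_mul_eq_length_mul_of_append hcurrent hnext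
    rwa [length_take, length_drop, min_eq_left (by omega)] at this
  have hQ : 0 < ∑ b, q b := sum_count_div_gcd_pos fun hnil => by simp [m, hnil] at hk
  have hfirst := hblock 0 (by omega)
  rw [zero_mul, drop_zero] at hfirst
  exact Nat.eq_of_mul_eq_mul_right hQ ((hblock k hk).trans hfirst.symm)

end

theorem fullAbelianPeriod_iff_scaled_suffixes_general {α : Type*} [Fintype α]
    [DecidableEq α] (w : List α) (g : ℕ)
    (hg : g = Finset.univ.gcd fun a : α => w.count a)
    (p : ℕ) (hp : 0 < p) (hpn : p ∣ w.length) :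
    FullAbelianPeriod w p ↔
      ∀ k < w.length / p, IsScaledFactor g w (w.drop (k * p)) := by
  subst hg
  exact ⟨fun h _ hk => h.isScaledFactor_drop hk,
    fullAbelianPeriod_of_isScaledFactor_drop hp hpn⟩

/-- Let `w` be a nonempty word of length `n` and `p > 0` a divisor of `n`.
Then `p` is a full Abelian period of `w` if and only if for every
`0 ≤ k ≤ n/p - 1`, the suffix of `w` starting at position `k * p` is a
scaled factor of `w`. -/
theorem fullAbelianPeriod_iff_scaled_suffixes {α : Type*} [Fintype α]
    [DecidableEq α] (w : List α) (hw : w ≠ []) (g : ℕ)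
    (hg : g = Finset.univ.gcd fun a : α => w.count a)
    (p : ℕ) (hp : 0 < p) (hpn : p ∣ w.length) :
    FullAbelianPeriod w p ↔
      ∀ k < w.length / p, IsScaledFactor g w (w.drop (k * p)) :=
  fullAbelianPeriod_iff_scaled_suffixes_general w g hg p hp hpn
end

section
/- Let w be a nonempty word of length n over a finite alphabet and let p be a full Abelian period of w. Suppose 0 ≤ i < j ≤ n are positions such that the suffixes of w starting at i and at j are both scaled factors of w, and no suffix of w starting at a position strictly between i and j is a scaled factor of w. Then j − i ≤ p. In particular, every full Abelian period of w is at least the length of the longest irreducible scaled factor appearing in the factorization of w into irreducible scaled factors. -/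
/-- A nonempty scaled factor of `w` is irreducible if it cannot be written as
the concatenation of two nonempty scaled factors of `w`. -/
def IsIrreducibleScaledFactor {α : Type*} [DecidableEq α]
    (g : ℕ) (w v : List α) : Prop :=
  v ≠ [] ∧ IsScaledFactor g w v ∧
    ¬ ∃ v₁ v₂ : List α, v = v₁ ++ v₂ ∧ v₁ ≠ [] ∧ v₂ ≠ [] ∧
      IsScaledFactor g w v₁ ∧ IsScaledFactor g w v₂

theorem Nat.sub_le_of_mul_mem {S : Set ℕ} {p n i j : ℕ} (hp : 0 < p)
    (hS : ∀ k, k * p ≤ n → k * p ∈ S) (hij : i < j) (hjn : j ≤ n)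
    (hgap : ∀ m, i < m → m < j → m ∉ S) : j - i ≤ p := by
  by_contra! hlt
  have := Nat.div_add_mod' i p
  have := Nat.mod_lt i hp
  refine hgap ((i / p + 1) * p) ?_ ?_ (hS _ ?_) <;> rw [Nat.succ_mul] <;> omega

section ParikhMultiple

variable {α : Type*} [DecidableEq α]

def IsParikhMultiple (c : α → ℕ) (u : List α) : Prop :=
  ∃ k : ℕ, ∀ a : α, u.count a = k * c a

variable {c : α → ℕ}

theorem IsParikhMultiple.append {x y : List α} (hx : IsParikhMultiple c x)
    (hy : IsParikhMultiple c y) : IsParikhMultiple c (x ++ y) := by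
  obtain ⟨k, hk⟩ := hx
  obtain ⟨l, hl⟩ := hy
  exact ⟨k + l, fun a => by rw [List.count_append, hk, hl, add_mul]⟩

theorem IsParikhMultiple.flatten {us : List (List α)} (h : ∀ u ∈ us, IsParikhMultiple c u) :
    IsParikhMultiple c us.flatten := by
  induction us with
  | nil => exact ⟨0, by simp⟩
  | cons u us ih =>
    rw [List.flatten_cons]
    exact (h u List.mem_cons_self).append (ih fun v hv => h v (List.mem_cons_of_mem u hv))

theorem IsParikhMultiple.left_of_append {x y : List α} (hxy : IsParikhMultiple c (x ++ y))
    (hy : IsParikhMultiple c y) : IsParikhMultiple c x := by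
  obtain ⟨k, hk⟩ := hxy
  obtain ⟨l, hl⟩ := hy
  refine ⟨k - l, fun a => ?_⟩
  have := hk a
  rw [List.count_append, hl] at this
  rw [Nat.sub_mul]
  omega

end ParikhMultiple

section ScaledFactor

variable {α : Type*} [DecidableEq α] {g : ℕ} {w : List α}

theorem isScaledFactor_drop_iff {i : ℕ} :
    IsScaledFactor g w (w.drop i) ↔ IsParikhMultiple (fun a => w.count a / g) (w.drop i) :=
  and_iff_right (List.drop_suffix i w).isInfix

theorem IsIrreducibleScaledFactor.not_isParikhMultiple_drop_append {v s : List α}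
    (hv : IsIrreducibleScaledFactor g w v) (hs : IsParikhMultiple (fun a => w.count a / g) s)
    {m : ℕ} (hm0 : 0 < m) (hm : m < v.length) :
    ¬ IsParikhMultiple (fun a => w.count a / g) (v.drop m ++ s) := by
  intro hdrop_append
  obtain ⟨-, ⟨hvw, hvmul⟩, hsplit⟩ := hv
  have hdrop := hdrop_append.left_of_append hs
  have htake : IsParikhMultiple _ (v.take m) :=
    .left_of_append (by rwa [List.take_append_drop]) hdrop
  refine hsplit ⟨v.take m, v.drop m, (List.take_append_drop m v).symm, ?_, ?_,
    ⟨(List.take_prefix m v).isInfix.trans hvw, htake⟩,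
    ⟨(List.drop_suffix m v).isInfix.trans hvw, hdrop⟩⟩
  · rw [← List.length_pos_iff, List.length_take]
    omega
  · rw [← List.length_pos_iff, List.length_drop]
    omega

theorem exists_not_isScaledFactor_drop_inside_of_mem_factorization {v : List α}
    {vs : List (List α)} (hvs : vs.flatten = w)
    (hirr : ∀ u ∈ vs, IsIrreducibleScaledFactor g w u) (hv : v ∈ vs) :
    ∃ i, i + v.length ≤ w.length ∧
      ∀ m, i < m → m < i + v.length → ¬ IsScaledFactor g w (w.drop m) := by
  obtain ⟨l₁, l₂, rfl⟩ := List.append_of_mem hv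
  have hw : w = l₁.flatten ++ (v ++ l₂.flatten) := by
    rw [← hvs]
    simp
  have hdrop : ∀ m ≤ v.length, w.drop (l₁.flatten.length + m) = v.drop m ++ l₂.flatten := by
    intro m hm
    rw [hw, ← List.drop_drop, List.drop_left, List.drop_append_of_le_length hm]
  have hmul : ∀ u ∈ l₁ ++ v :: l₂, IsParikhMultiple (fun a => w.count a / g) u :=
    fun u hu => (hirr u hu).2.1.2
  have htail : IsParikhMultiple (fun a => w.count a / g) l₂.flatten :=
    .flatten fun u hu => hmul u (by simp [hu])
  refine ⟨l₁.flatten.length, by rw [hw]; simp, fun m h₁ h₂ hm => ?_⟩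
  obtain ⟨m, rfl⟩ := Nat.exists_eq_add_of_lt h₁
  rw [isScaledFactor_drop_iff, add_assoc, hdrop (m + 1) (by omega)] at hm
  exact (hirr v (by simp)).not_isParikhMultiple_drop_append htail m.succ_pos (by omega) hm

end ScaledFactor

namespace FullAbelianPeriod

variable {α : Type*} [DecidableEq α] {w : List α} {p : ℕ}

theorem count_take_mul (hp : FullAbelianPeriod w p) {k : ℕ} (hk : k ≤ w.length / p) (a : α) :
    (w.take (k * p)).count a = k * (w.take p).count a := by
  induction k with
  | zero => simp
  | succ k ih =>
    rw [Nat.succ_mul, List.take_add, List.count_append, ih (by omega), hp.2.2 k (by omega) a,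
      Nat.succ_mul]

theorem count_eq_s9 (hp : FullAbelianPeriod w p) (a : α) :
    w.count a = w.length / p * (w.take p).count a := by
  rw [← hp.count_take_mul le_rfl, Nat.div_mul_cancel hp.2.1, List.take_length]

theorem count_drop_mul (hp : FullAbelianPeriod w p) {k : ℕ} (hk : k ≤ w.length / p) (a : α) :
    (w.drop (k * p)).count a = (w.length / p - k) * (w.take p).count a := by
  have hsplit := congrArg (List.count a) (List.take_append_drop (k * p) w)
  rw [List.count_append, hp.count_take_mul hk, hp.count_eq_s9 a] at hsplit
  rw [Nat.sub_mul]
  omega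

theorem isScaledFactor_drop_mul [Fintype α] {g : ℕ}
    (hg : g = Finset.univ.gcd fun a : α => w.count a) (hp : FullAbelianPeriod w p) {k : ℕ}
    (hk : k ≤ w.length / p) : IsScaledFactor g w (w.drop (k * p)) := by
  rw [isScaledFactor_drop_iff]
  rcases (w.length / p).eq_zero_or_pos with hq | hq
  · exact ⟨0, fun a => by rw [hp.count_drop_mul hk, hq, Nat.zero_sub, zero_mul, zero_mul]⟩
  set d := Finset.univ.gcd fun a : α => (w.take p).count a
  have hgd : g = w.length / p * d := by
    simp_rw [hg, hp.count_eq_s9, Finset.gcd_mul_left, normalize_eq, d]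
  refine ⟨(w.length / p - k) * d, fun a => ?_⟩
  dsimp only
  rw [hp.count_drop_mul hk, hgd, hp.count_eq_s9 a, Nat.mul_div_mul_left _ _ hq, mul_assoc,
    Nat.mul_div_cancel' (Finset.gcd_dvd (Finset.mem_univ a))]

theorem sub_le_of_not_isScaledFactor_drop_between [Fintype α] {g : ℕ}
    (hg : g = Finset.univ.gcd fun a : α => w.count a) (hp : FullAbelianPeriod w p) {i j : ℕ}
    (hij : i < j) (hjn : j ≤ w.length)
    (hgap : ∀ m, i < m → m < j → ¬ IsScaledFactor g w (w.drop m)) : j - i ≤ p :=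
  Nat.sub_le_of_mul_mem (S := {m | IsScaledFactor g w (w.drop m)}) hp.1
    (fun _ hk => hp.isScaledFactor_drop_mul hg ((Nat.le_div_iff_mul_le hp.1).2 hk)) hij hjn hgap

end FullAbelianPeriod

theorem fullAbelianPeriod_ge_gap_general {α : Type*} [Fintype α] [DecidableEq α]
    (w : List α) (g : ℕ)
    (hg : g = Finset.univ.gcd fun a : α => w.count a)
    (p : ℕ) (hp : FullAbelianPeriod w p) :
    (∀ i j : ℕ, i < j → j ≤ w.length →
      IsScaledFactor g w (w.drop i) → IsScaledFactor g w (w.drop j) →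
      (∀ m : ℕ, i < m → m < j → ¬ IsScaledFactor g w (w.drop m)) →
      j - i ≤ p) ∧
    (∀ vs : List (List α), vs.flatten = w →
      (∀ v ∈ vs, IsIrreducibleScaledFactor g w v) →
      ∀ v ∈ vs, v.length ≤ p) := by
  refine ⟨fun i j hij hjn _ _ hgap =>
    hp.sub_le_of_not_isScaledFactor_drop_between hg hij hjn hgap, fun vs hvs hirr v hv => ?_⟩
  obtain ⟨i, hjn, hgap⟩ :=
    exists_not_isScaledFactor_drop_inside_of_mem_factorization hvs hirr hv
  have := hp.sub_le_of_not_isScaledFactor_drop_between hg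
    (Nat.lt_add_of_pos_right (List.length_pos_iff.2 (hirr v hv).1)) hjn hgap
  omega

/-- Let `p` be a full Abelian period of the nonempty word `w`. If
`0 ≤ i < j ≤ n` are positions such that the suffixes of `w` starting at `i`
and at `j` are scaled and no suffix starting strictly between `i` and `j` is
scaled, then `j - i ≤ p`. In particular, every full Abelian period of `w` is
at least the length of every irreducible scaled factor appearing in the
factorization of `w` into irreducible scaled factors. -/
theorem fullAbelianPeriod_ge_gap {α : Type*} [Fintype α] [DecidableEq α]
    (w : List α) (hw : w ≠ []) (g : ℕ)
    (hg : g = Finset.univ.gcd fun a : α => w.count a)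
    (p : ℕ) (hp : FullAbelianPeriod w p) :
    (∀ i j : ℕ, i < j → j ≤ w.length →
      IsScaledFactor g w (w.drop i) → IsScaledFactor g w (w.drop j) →
      (∀ m : ℕ, i < m → m < j → ¬ IsScaledFactor g w (w.drop m)) →
      j - i ≤ p) ∧
    (∀ vs : List (List α), vs.flatten = w →
      (∀ v ∈ vs, IsIrreducibleScaledFactor g w v) →
      ∀ v ∈ vs, v.length ≤ p) :=
  fullAbelianPeriod_ge_gap_general w g hg p hp
end

section
/- Every nonempty word w over a finite alphabet admits a factorization w = v₁v₂⋯v_r into nonempty irreducible scaled factors, and this factorization is unique: if w = v₁⋯v_r = v'₁⋯v'_t are two factorizations of w into nonempty irreducible scaled factors, then r = t and vᵢ = v'ᵢ for every i. -/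
/-!
Since the Parikh vector of `w` divided by `g` has a positive entry, the multiplier `k` of a scaled
factor is determined by its Parikh vector, so removing a scaled prefix from a scaled factor leaves
a scaled factor. Hence no irreducible factor is a proper prefix of another, and two factorizations
of `w` agree factor by factor. Existence is descent: a scaled factor that is not irreducible splits
into two shorter ones.
-/

section ParikhMultiple

variable {α : Type*} [DecidableEq α]

theorem IsParikhMultiple.of_append_left {c : α → ℕ} (hc : ∃ a, 0 < c a) {u v : List α}
    (huv : IsParikhMultiple c (u ++ v)) (hu : IsParikhMultiple c u) :
    IsParikhMultiple c v := by
  obtain ⟨k, hk⟩ := huv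
  obtain ⟨l, hl⟩ := hu
  obtain ⟨a₀, ha₀⟩ := hc
  have hlk : l ≤ k := by
    have := hk a₀
    rw [List.count_append, hl a₀] at this
    exact Nat.le_of_mul_le_mul_right (by omega) ha₀
  refine ⟨k - l, fun a => ?_⟩
  have := hk a
  rw [List.count_append, hl a] at this
  rw [Nat.sub_mul]
  omega

end ParikhMultiple

section ScaledFactor

variable {α : Type*} [DecidableEq α] {g : ℕ} {w : List α}

theorem exists_pos_count_div_gcd [Fintype α] (hw : w ≠ [])
    (hg : g = Finset.univ.gcd fun a : α => w.count a) : ∃ a, 0 < w.count a / g := by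
  obtain ⟨a, ha⟩ := List.exists_mem_of_ne_nil w hw
  have hpos : 0 < w.count a := List.count_pos_iff.mpr ha
  have hdvd : g ∣ w.count a := hg ▸ Finset.gcd_dvd (Finset.mem_univ a)
  exact ⟨a, Nat.div_pos (Nat.le_of_dvd hpos hdvd) (Nat.pos_of_dvd_of_pos hdvd hpos)⟩

theorem isScaledFactor_self [Fintype α] (hg : g = Finset.univ.gcd fun a : α => w.count a) :
    IsScaledFactor g w w :=
  ⟨List.infix_refl w, g, fun a =>
    (Nat.mul_div_cancel' (hg ▸ Finset.gcd_dvd (Finset.mem_univ a))).symm⟩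

theorem IsScaledFactor.of_append_left (hc : ∃ a, 0 < w.count a / g) {u v : List α}
    (huv : IsScaledFactor g w (u ++ v)) (hu : IsScaledFactor g w u) : IsScaledFactor g w v :=
  ⟨(List.suffix_append u v).isInfix.trans huv.1,
    IsParikhMultiple.of_append_left hc huv.2 hu.2⟩

theorem IsIrreducibleScaledFactor.eq_of_prefix (hc : ∃ a, 0 < w.count a / g) {v v' : List α}
    (hv : IsIrreducibleScaledFactor g w v) (hv' : IsIrreducibleScaledFactor g w v')
    (h : v <+: v') : v = v' := by
  obtain ⟨r, rfl⟩ := h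
  rcases eq_or_ne r [] with rfl | hr
  · exact (List.append_nil v).symm
  · exact absurd ⟨v, r, rfl, hv.1, hr, hv.2.1, hv'.2.1.of_append_left hc hv.2.1⟩ hv'.2.2

theorem IsScaledFactor.exists_flatten_eq {u : List α} (hu : IsScaledFactor g w u) :
    ∃ vs : List (List α), vs.flatten = u ∧ ∀ v ∈ vs, IsIrreducibleScaledFactor g w v := by
  rcases eq_or_ne u [] with rfl | hne
  · exact ⟨[], rfl, by simp⟩
  by_cases hirr : IsIrreducibleScaledFactor g w u
  · exact ⟨[u], by simp, by simpa⟩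
  obtain ⟨v₁, v₂, rfl, hv₁, hv₂, hs₁, hs₂⟩ := not_not.mp fun h => hirr ⟨hne, hu, h⟩
  obtain ⟨vs₁, rfl, h₁⟩ := hs₁.exists_flatten_eq
  obtain ⟨vs₂, rfl, h₂⟩ := hs₂.exists_flatten_eq
  exact ⟨vs₁ ++ vs₂, List.flatten_append, fun v hv => (List.mem_append.mp hv).elim (h₁ v) (h₂ v)⟩
termination_by u.length
decreasing_by all_goals simp [List.length_pos_iff, *]

theorem eq_of_flatten_eq_of_isIrreducibleScaledFactor (hc : ∃ a, 0 < w.count a / g)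
    {vs vs' : List (List α)} (h : vs.flatten = vs'.flatten)
    (hvs : ∀ v ∈ vs, IsIrreducibleScaledFactor g w v)
    (hvs' : ∀ v ∈ vs', IsIrreducibleScaledFactor g w v) : vs = vs' := by
  induction vs generalizing vs' with
  | nil =>
    cases vs' with
    | nil => rfl
    | cons v' t' => exact absurd (List.append_eq_nil_iff.mp h.symm).1 (hvs' v' (by simp)).1
  | cons v t ih =>
    cases vs' with
    | nil => exact absurd (List.append_eq_nil_iff.mp h).1 (hvs v (by simp)).1
    | cons v' t' =>
      rw [List.flatten_cons, List.flatten_cons] at h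
      have hv := hvs v (by simp)
      have hv' := hvs' v' (by simp)
      have hvv' : v = v' := by
        rcases List.prefix_or_prefix_of_prefix (List.prefix_append v t.flatten)
          (h ▸ List.prefix_append v' t'.flatten) with hp | hp
        · exact hv.eq_of_prefix hc hv' hp
        · exact (hv'.eq_of_prefix hc hv hp).symm
      subst hvv'
      rw [ih (List.append_cancel_left h) (fun x hx => hvs x (by simp [hx]))
        (fun x hx => hvs' x (by simp [hx]))]

end ScaledFactor

/-- Every nonempty word `w` admits a factorization `w = v₁v₂⋯v_r` into
nonempty irreducible scaled factors, and this factorization is unique. -/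
theorem irreducible_scaled_factorization {α : Type*} [Fintype α]
    [DecidableEq α] (w : List α) (hw : w ≠ []) (g : ℕ)
    (hg : g = Finset.univ.gcd fun a : α => w.count a) :
    (∃ vs : List (List α), vs.flatten = w ∧
      ∀ v ∈ vs, IsIrreducibleScaledFactor g w v) ∧
    (∀ vs vs' : List (List α),
      vs.flatten = w → (∀ v ∈ vs, IsIrreducibleScaledFactor g w v) →
      vs'.flatten = w → (∀ v ∈ vs', IsIrreducibleScaledFactor g w v) →
      vs = vs') := by
  have hc := exists_pos_count_div_gcd hw hg
  refine ⟨(isScaledFactor_self hg).exists_flatten_eq, fun vs vs' h hvs h' hvs' => ?_⟩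
  exact eq_of_flatten_eq_of_isIrreducibleScaledFactor hc (h.trans h'.symm) hvs hvs'
end

section
/- Let w be a nonempty word of length n over a finite alphabet, let g be the greatest common divisor of the entries of the Parikh vector of w, and let s = n/g. Then the set of full Abelian periods of w equals the set of integers of the form d·s where d is a positive divisor of g such that every positive multiple of d·s that is strictly less than n is the starting position of a scaled suffix of w. -/
/-! If `p` is a full Abelian period, with `q = n / p` blocks sharing the Parikh vector `v`, then
`𝒫_w = q • v`, so `g = q * gcd v` and `p = (gcd v) * s`, and the suffix starting at `m * p`
has Parikh vector `(q - m) • v`, a multiple of `𝒫_w / g`. Conversely, a scaled suffix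
starting at `m * d * s` has length `n - m * d * s = (g - m * d) * s`, which forces its Parikh
vector to be `(g - m * d) • 𝒫_w / g`; consecutive differences then show that every block
of length `d * s` has Parikh vector `d • 𝒫_w / g`. -/

open Finset

section

variable {α : Type*} [DecidableEq α]

theorem List.count_drop_eq_count_take_add (l : List α) (i p : ℕ) (a : α) :
    (l.drop i).count a = ((l.drop i).take p).count a + (l.drop (i + p)).count a := by
  conv_lhs => rw [← List.take_append_drop p (l.drop i)]
  rw [List.count_append, List.drop_drop]

section Blocks

variable {w : List α} {p : ℕ}

theorem count_drop_mul_of_count_block (hp : p ∣ w.length) {v : α → ℕ}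
    (hv : ∀ k < w.length / p, ∀ a, ((w.drop (k * p)).take p).count a = v a)
    {m : ℕ} (hm : m ≤ w.length / p) (a : α) :
    (w.drop (m * p)).count a = (w.length / p - m) * v a := by
  obtain ⟨j, hj⟩ := Nat.exists_eq_add_of_le hm
  rw [hj, Nat.add_sub_cancel_left]
  induction j generalizing m with
  | zero =>
    obtain rfl : m = w.length / p := hj.symm
    simp [Nat.div_mul_cancel hp]
  | succ j ih =>
    rw [w.count_drop_eq_count_take_add _ p, hv m (by omega), ← Nat.succ_mul,
      ih (by omega) (by omega)]
    ring

theorem count_block_of_count_drop_mul {q : ℕ} {v : α → ℕ}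
    (hv : ∀ m ≤ q, ∀ a, (w.drop (m * p)).count a = (q - m) * v a)
    {k : ℕ} (hk : k < q) (a : α) :
    ((w.drop (k * p)).take p).count a = v a := by
  have hsplit := w.count_drop_eq_count_take_add (k * p) p a
  rw [← Nat.succ_mul, hv k hk.le, hv (k + 1) hk, show q - k = q - (k + 1) + 1 by omega,
    Nat.succ_mul] at hsplit
  omega

theorem fullAbelianPeriod_of_count_drop_mul (hp : 0 < p) (hpn : p ∣ w.length) (v : α → ℕ)
    (hv : ∀ m ≤ w.length / p, ∀ a, (w.drop (m * p)).count a = (w.length / p - m) * v a) :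
    FullAbelianPeriod w p := by
  refine ⟨hp, hpn, fun k hk a => ?_⟩
  rw [count_block_of_count_drop_mul hv hk, ← count_block_of_count_drop_mul hv (Nat.zero_lt_of_lt hk)]
  simp

theorem FullAbelianPeriod.count_drop_mul_s11 (hp : FullAbelianPeriod w p) {m : ℕ}
    (hm : m ≤ w.length / p) (a : α) :
    (w.drop (m * p)).count a = (w.length / p - m) * (w.take p).count a :=
  count_drop_mul_of_count_block hp.2.1 hp.2.2 hm a

theorem FullAbelianPeriod.length_div_pos (hw : w ≠ []) (hp : FullAbelianPeriod w p) :
    0 < w.length / p :=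
  Nat.div_pos (Nat.le_of_dvd (List.length_pos_iff.2 hw) hp.2.1) hp.1

end Blocks

section Parikh

variable [Fintype α]

theorem List.length_eq_sum_count (l : List α) : l.length = ∑ a, l.count a := by
  rw [← List.sum_toFinset_count_eq_length]
  exact sum_subset (subset_univ _) fun a _ ha => List.count_eq_zero.2 (by simpa using ha)

theorem sum_count_div_eq_length_div {w : List α} {g : ℕ} (hg : ∀ a, g ∣ w.count a) :
    ∑ a, w.count a / g = w.length / g := by
  rw [w.length_eq_sum_count, Nat.sum_div fun a _ => hg a]

def parikhGcd (w : List α) : ℕ := univ.gcd fun a => w.count a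

variable {w : List α}

theorem parikhGcd_dvd_count (w : List α) (a : α) : parikhGcd w ∣ w.count a :=
  gcd_dvd (mem_univ a)

theorem parikhGcd_dvd_length (w : List α) : parikhGcd w ∣ w.length :=
  w.length_eq_sum_count ▸ dvd_sum fun a _ => parikhGcd_dvd_count w a

theorem parikhGcd_pos (hw : w ≠ []) : 0 < parikhGcd w := by
  obtain ⟨a, ha⟩ := List.exists_mem_of_ne_nil w hw
  exact Nat.pos_of_ne_zero fun h =>
    (List.count_pos_iff.2 ha).ne' ((gcd_eq_zero_iff.1 h) a (mem_univ a))

theorem length_div_parikhGcd_pos (hw : w ≠ []) : 0 < w.length / parikhGcd w :=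
  Nat.div_pos (Nat.le_of_dvd (List.length_pos_iff.2 hw) (parikhGcd_dvd_length w))
    (parikhGcd_pos hw)

theorem isScaledFactor_self_s11 : IsScaledFactor (parikhGcd w) w w :=
  ⟨List.infix_refl w, parikhGcd w, fun a => (Nat.mul_div_cancel' (parikhGcd_dvd_count w a)).symm⟩

theorem IsScaledFactor.count_eq (hw : w ≠ []) {u : List α}
    (hu : IsScaledFactor (parikhGcd w) w u) (a : α) :
    u.count a = u.length / (w.length / parikhGcd w) * (w.count a / parikhGcd w) := by
  obtain ⟨-, k, hk⟩ := hu
  have hlen : u.length = k * (w.length / parikhGcd w) := by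
    rw [u.length_eq_sum_count, ← sum_count_div_eq_length_div (parikhGcd_dvd_count w), mul_sum]
    exact sum_congr rfl fun a _ => hk a
  rw [hk a, hlen, Nat.mul_div_cancel _ (length_div_parikhGcd_pos hw)]

end Parikh

section Periods

variable [Fintype α] {w : List α} {p : ℕ}

theorem FullAbelianPeriod.parikhGcd_eq (hp : FullAbelianPeriod w p) :
    parikhGcd w = w.length / p * parikhGcd (w.take p) := by
  have hcount := hp.count_drop_mul_s11 (Nat.zero_le _)
  simp only [zero_mul, List.drop_zero, Nat.sub_zero] at hcount
  rw [parikhGcd, gcd_congr rfl fun a _ => hcount a, Finset.gcd_mul_left, normalize_eq]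
  rfl

theorem FullAbelianPeriod.count_div_parikhGcd (hw : w ≠ []) (hp : FullAbelianPeriod w p) (a : α) :
    w.count a / parikhGcd w = (w.take p).count a / parikhGcd (w.take p) := by
  have hcount := hp.count_drop_mul_s11 (Nat.zero_le _) a
  simp only [zero_mul, List.drop_zero, Nat.sub_zero] at hcount
  rw [hcount, hp.parikhGcd_eq, Nat.mul_div_mul_left _ _ (hp.length_div_pos hw)]

theorem FullAbelianPeriod.exists_eq_mul (hw : w ≠ []) (hp : FullAbelianPeriod w p) :
    ∃ d, 0 < d ∧ d ∣ parikhGcd w ∧ p = d * (w.length / parikhGcd w) := by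
  have hq := hp.length_div_pos hw
  have hlen : (w.take p).length = p :=
    List.length_take_of_le (Nat.le_of_dvd (List.length_pos_iff.2 hw) hp.2.1)
  have hd := parikhGcd_pos (w := w.take p) (by rw [← List.length_pos_iff, hlen]; exact hp.1)
  have hdp : parikhGcd (w.take p) ∣ p := by
    have := parikhGcd_dvd_length (w.take p)
    rwa [hlen] at this
  refine ⟨parikhGcd (w.take p), hd, ⟨w.length / p, by rw [hp.parikhGcd_eq, mul_comm]⟩, ?_⟩
  calc p = parikhGcd (w.take p) * (p / parikhGcd (w.take p)) :=
        (Nat.mul_div_cancel' hdp).symm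
    _ = parikhGcd (w.take p) * (w.length / parikhGcd w) := by
        rw [hp.parikhGcd_eq, ← Nat.mul_div_mul_left p _ hq, Nat.div_mul_cancel hp.2.1]

theorem FullAbelianPeriod.isScaledFactor_drop_s11 (hw : w ≠ []) (hp : FullAbelianPeriod w p) {m : ℕ}
    (hm : m ≤ w.length / p) : IsScaledFactor (parikhGcd w) w (w.drop (m * p)) :=
  ⟨(List.drop_suffix _ _).isInfix, (w.length / p - m) * parikhGcd (w.take p), fun a => by
    rw [hp.count_drop_mul_s11 hm, hp.count_div_parikhGcd hw, mul_assoc,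
      Nat.mul_div_cancel' (parikhGcd_dvd_count _ a)]⟩

theorem fullAbelianPeriod_of_isScaledFactor_drop_s11 (hw : w ≠ []) {d : ℕ} (hd : 0 < d)
    (hdg : d ∣ parikhGcd w)
    (h : ∀ m, 0 < m → m * (d * (w.length / parikhGcd w)) < w.length →
      IsScaledFactor (parikhGcd w) w (w.drop (m * (d * (w.length / parikhGcd w))))) :
    FullAbelianPeriod w (d * (w.length / parikhGcd w)) := by
  set s := w.length / parikhGcd w
  have hs : 0 < s := length_div_parikhGcd_pos hw
  have hn : w.length = parikhGcd w * s := (Nat.mul_div_cancel' (parikhGcd_dvd_length w)).symm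
  obtain ⟨e, he⟩ := hdg
  have hq : w.length / (d * s) = e := by
    rw [hn, he, mul_right_comm, Nat.mul_div_cancel_left _ (Nat.mul_pos hd hs)]
  have hscaled : ∀ m ≤ e, IsScaledFactor (parikhGcd w) w (w.drop (m * (d * s))) := by
    intro m hm
    rcases Nat.eq_zero_or_pos m with rfl | hm0
    · simpa using isScaledFactor_self_s11
    have hle : m * (d * s) ≤ w.length := by
      rw [hn, he]
      exact (Nat.mul_le_mul_right _ hm).trans_eq (by ring)
    rcases hle.lt_or_eq with hlt | heq
    · exact h m hm0 hlt
    · exact ⟨(List.drop_suffix _ _).isInfix, 0, by simp [heq]⟩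
  refine fullAbelianPeriod_of_count_drop_mul (Nat.mul_pos hd hs) ⟨e, by rw [hn, he]; ring⟩
    (fun a => d * (w.count a / parikhGcd w)) fun m hm a => ?_
  rw [hq] at hm ⊢
  have hlen : w.length - m * (d * s) = (e - m) * d * s := by
    rw [hn, he, Nat.sub_mul, Nat.sub_mul]; ring_nf
  rw [(hscaled m hm).count_eq hw, List.length_drop, hlen, Nat.mul_div_cancel _ hs, mul_assoc]

end Periods

end

/-- Let `w` be a nonempty word of length `n`, `g` the gcd of the entries of
the Parikh vector of `w`, and `s = n / g`. The set of full Abelian periods of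
`w` equals the set of integers `d * s` where `d` is a positive divisor of `g`
such that every positive multiple of `d * s` that is strictly less than `n`
is the starting position of a scaled suffix of `w`. -/
theorem fullAbelianPeriods_eq {α : Type*} [Fintype α] [DecidableEq α]
    (w : List α) (hw : w ≠ []) (g s : ℕ)
    (hg : g = Finset.univ.gcd fun a : α => w.count a)
    (hs : s = w.length / g) :
    {p : ℕ | FullAbelianPeriod w p} =
      {p : ℕ | ∃ d : ℕ, 0 < d ∧ d ∣ g ∧ p = d * s ∧
        ∀ m : ℕ, 0 < m → m * (d * s) < w.length →
          IsScaledFactor g w (w.drop (m * (d * s)))} := by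
  subst hg hs
  ext p
  refine ⟨fun hp => ?_, fun ⟨d, hd, hdg, hpd, h⟩ =>
    hpd ▸ fullAbelianPeriod_of_isScaledFactor_drop_s11 hw hd hdg h⟩
  obtain ⟨d, hd, hdg, hpd⟩ := hp.exists_eq_mul hw
  refine ⟨d, hd, hdg, hpd, fun m _ hm => hpd ▸ hp.isScaledFactor_drop_s11 hw ?_⟩
  exact (Nat.le_div_iff_mul_le hp.1).2 (hpd ▸ hm.le)
end
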